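/- arXiv:2308.04676 — 4 statements merged into one kernel-verified Lean document; each statement's English description precedes it below -/
import Mathlib

section
/- Let q ≥ 2, m ≥ 2 and r < m be positive integers, let h be a bijection from {1,…,r} onto a subset S₂ ⊆ {1,…,m} with smallest element h(u), and fix digits a_l ∈ {1,…,q-1} for l ∈ {1,…,r}\{u}. If an integer i satisfies i ≤ Σ_{l≠u} a_l q^{h(l)-1} + q^{h(u)} - 1 and its q-ary digits satisfy i_{h(l)} = a_l for all l ∈ {1,…,r}\{u}, then i_s = 0 for every index s with h(u)+1 ≤ s ≤ m-1 and s ∉ {h(l) : l ∈ {1,…,r}\{u}}. -/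
/-!
The digits of `i` at the positions `h l` (`l ≠ u`) already contribute
`B = ∑ a l * q ^ (h l - 1)` to `i`, so `i ≤ B + q ^ h(u) - 1` leaves less than
`q ^ h(u) ≤ q ^ (s - 1)` for all other digits. A nonzero digit at a free position `s > h(u)`
would alone contribute at least `q ^ (s - 1)`.
-/

open Finset

/-- The `k`-th `q`-ary digit (1-indexed) of the natural number `i`. -/
def dig (q i k : ℕ) : ℕ := i / q ^ (k - 1) % q

theorem sum_dig_mul_pow_eq_mod (q i m : ℕ) :
    ∑ k ∈ Icc 1 m, dig q i k * q ^ (k - 1) = i % q ^ m := by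
  induction m with
  | zero => simp [Nat.mod_one]
  | succ m ih =>
    rw [sum_Icc_succ_top (by omega), ih, pow_succ, Nat.mod_mul, dig, Nat.add_sub_cancel]
    ring

theorem sum_dig_mul_pow_add_le_mod {q i m s : ℕ} {T : Finset ℕ} (hT : T ⊆ Icc 1 m)
    (hs : s ∈ Icc 1 m) (hsT : s ∉ T) :
    ∑ k ∈ T, dig q i k * q ^ (k - 1) + dig q i s * q ^ (s - 1) ≤ i % q ^ m := by
  rw [← sum_dig_mul_pow_eq_mod, add_comm,
    ← sum_insert hsT (f := fun k => dig q i k * q ^ (k - 1))]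
  exact sum_le_sum_of_subset (insert_subset hs hT)

theorem stmt2_general (q m r : ℕ) (hq : 2 ≤ q)
    (h : ℕ → ℕ) (u : ℕ)
    (hinj : ∀ l ∈ Finset.Icc 1 r, ∀ l' ∈ Finset.Icc 1 r, h l = h l' → l = l')
    (hrange : ∀ l ∈ Finset.Icc 1 r, h l ∈ Finset.Icc 1 m)
    (a : ℕ → ℕ)
    (i : ℕ) (him : i < q ^ m)
    (hi2 : i ≤ ∑ l ∈ (Finset.Icc 1 r).erase u, a l * q ^ (h l - 1) + q ^ (h u) - 1)
    (hdig : ∀ l ∈ (Finset.Icc 1 r).erase u, dig q i (h l) = a l)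
    (s : ℕ) (hs1 : h u + 1 ≤ s) (hs2 : s ≤ m - 1)
    (hs3 : ∀ l ∈ (Finset.Icc 1 r).erase u, s ≠ h l) :
    dig q i s = 0 := by
  set F := (Icc 1 r).erase u
  have hB : ∑ l ∈ F, a l * q ^ (h l - 1) = ∑ k ∈ F.image h, dig q i k * q ^ (k - 1) := by
    rw [sum_image fun l hl l' hl' => hinj l (mem_of_mem_erase hl) l' (mem_of_mem_erase hl')]
    exact sum_congr rfl fun l hl => by rw [hdig l hl]
  have hsub : F.image h ⊆ Icc 1 m := by
    rintro _ hk
    obtain ⟨l, hl, rfl⟩ := mem_image.mp hk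
    exact hrange l (mem_of_mem_erase hl)
  have hsF : s ∉ F.image h := by simpa using fun l hl => (hs3 l hl).symm
  have hle := sum_dig_mul_pow_add_le_mod (q := q) (i := i) hsub
    (mem_Icc.mpr ⟨by omega, by omega⟩) hsF
  rw [Nat.mod_eq_of_lt him, ← hB] at hle
  have hpos : 0 < q ^ h u := Nat.pow_pos (by omega)
  have hpow : q ^ h u ≤ q ^ (s - 1) := Nat.pow_le_pow_right (by omega) (by omega)
  have hlt : dig q i s * q ^ (s - 1) < 1 * q ^ (s - 1) := by
    generalize dig q i s * q ^ (s - 1) = x at hle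
    omega
  exact Nat.lt_one_iff.mp (Nat.lt_of_mul_lt_mul_right hlt)

theorem stmt2 (q m r : ℕ) (hq : 2 ≤ q) (hm : 2 ≤ m) (hr : 1 ≤ r) (hrm : r < m)
    (h : ℕ → ℕ) (u : ℕ) (hu : u ∈ Finset.Icc 1 r)
    (hinj : ∀ l ∈ Finset.Icc 1 r, ∀ l' ∈ Finset.Icc 1 r, h l = h l' → l = l')
    (hrange : ∀ l ∈ Finset.Icc 1 r, h l ∈ Finset.Icc 1 m)
    (hmin : ∀ l ∈ Finset.Icc 1 r, h u ≤ h l)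
    (a : ℕ → ℕ) (ha : ∀ l ∈ (Finset.Icc 1 r).erase u, a l ∈ Finset.Icc 1 (q - 1))
    (i : ℕ) (him : i < q ^ m)
    (hi2 : i ≤ ∑ l ∈ (Finset.Icc 1 r).erase u, a l * q ^ (h l - 1) + q ^ (h u) - 1)
    (hdig : ∀ l ∈ (Finset.Icc 1 r).erase u, dig q i (h l) = a l)
    (s : ℕ) (hs1 : h u + 1 ≤ s) (hs2 : s ≤ m - 1)
    (hs3 : ∀ l ∈ (Finset.Icc 1 r).erase u, s ≠ h l) :
    dig q i s = 0 :=
  stmt2_general q m r hq h u hinj hrange a i him hi2 hdig s hs1 hs2 hs3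
end

section
/- Let q ≥ 2, and let f, g be length-L ℤ_q-valued sequences that decompose into q^v blocks of equal length ℓ = L/q^v as f = g₀ | (g₀ ⊕ u₁) | ⋯ | (g₀ ⊕ u_{q^v-1}) and g = h₀ | (h₀ ⊕ w₁) | ⋯ | (h₀ ⊕ w_{q^v-1}), where u_k, w_k ∈ ℤ_q are constants added to every entry modulo q. Then for any 0 < τ < ℓ, the aperiodic cross-correlation satisfies R_{f,g}(τ) = (1 + Σ_{k=1}^{q^v-1} ξ^{u_k - w_k}) · R_{g₀,h₀}(τ) + (ξ^{-w_1} + Σ_{k=1}^{q^v-2} ξ^{u_k - w_{k+1}}) · conjugate(R_{h₀,g₀}(ℓ - τ)). -/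
open Finset Complex

/-- The primitive `q`-th root of unity `ξ = e^{2πi/q}`. -/
noncomputable def xiq (q : ℕ) : ℂ := Complex.exp (2 * Real.pi * Complex.I / q)

/-- The complex value `ξ^x` attached to `x ∈ ℤ_q`. -/
noncomputable def ec (q : ℕ) (x : ZMod q) : ℂ := xiq q ^ x.val

/-- Aperiodic cross-correlation of two length-`len` `ℤ_q`-valued sequences at shift `τ`. -/
noncomputable def Rq (q len : ℕ) (a b : ℕ → ZMod q) (τ : ℤ) : ℂ :=
  if 0 ≤ τ then ∑ i ∈ Finset.range (len - τ.toNat), ec q (a i - b (i + τ.toNat))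
  else ∑ i ∈ Finset.range (len - (-τ).toNat), ec q (a (i + (-τ).toNat) - b i)

/-!
Cut both sequences into their `q ^ v` blocks of length `ℓ`. For `τ < ℓ`, each product
`ξ ^ (f i - g (i + τ))` pairs position `r` of block `k` of `f` either with position `r + τ` of
the same block of `g` (when `r < ℓ - τ`) or with position `r + τ - ℓ` of block `k + 1`.
Since the block offsets are constants, the first kind contributes `ξ ^ (u k - w k) R_{g₀,h₀}(τ)`
and the second `ξ ^ (u k - w (k + 1))` times the tail sum `Σ_j ξ ^ (g₀ (ℓ - τ + j) - h₀ j)`,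
which is the conjugate of `R_{h₀,g₀}(ℓ - τ)`. The normalisation `u 0 = w 0 = 0` turns the
`k = 0` terms into `1` and `ξ ^ (-w 1)`.
-/

open ComplexConjugate

lemma Rq_natCast (q len : ℕ) (a b : ℕ → ZMod q) (τ : ℕ) :
    Rq q len a b τ = ∑ i ∈ range (len - τ), ec q (a i - b (i + τ)) := by
  simp [Rq]

lemma sum_range_mul_eq_sum_sum {M : Type*} [AddCommMonoid M] (F : ℕ → M) (n ℓ : ℕ) :
    ∑ i ∈ range (n * ℓ), F i = ∑ k ∈ range n, ∑ r ∈ range ℓ, F (k * ℓ + r) := by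
  induction n with
  | zero => simp
  | succ n ih => rw [Nat.succ_mul, sum_range_add, ih, sum_range_succ]

lemma sum_range_eq_add_sum_Icc {M : Type*} [AddCommMonoid M] (F : ℕ → M) {n : ℕ} (hn : 0 < n) :
    ∑ k ∈ range n, F k = F 0 + ∑ k ∈ Icc 1 (n - 1), F k := by
  rw [sum_range_eq_add_Ico F hn, Icc_sub_one_right_eq_Ico_of_not_isMin (by simpa using hn.ne')]

lemma apply_mul_add_of_blocks {q Q ℓ : ℕ} {f g0 u : ℕ → ZMod q}
    (hf : ∀ i < Q * ℓ, f i = g0 (i % ℓ) + u (i / ℓ)) {k r : ℕ} (hk : k < Q) (hr : r < ℓ) :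
    f (k * ℓ + r) = g0 r + u k := by
  have hlt : k * ℓ + r < Q * ℓ := by nlinarith
  rw [hf _ hlt, add_comm (k * ℓ), Nat.add_mul_mod_self_right, Nat.mod_eq_of_lt hr,
    Nat.add_mul_div_right _ _ (by omega), Nat.div_eq_of_lt hr, zero_add]

section

variable {q : ℕ} [NeZero q]

lemma ec_eq_toCircle (x : ZMod q) : ec q x = ZMod.toCircle x := by
  rw [ZMod.toCircle_apply, ec, xiq, ← Complex.exp_nat_mul]
  ring_nf

lemma ec_add (x y : ZMod q) : ec q (x + y) = ec q x * ec q y := by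
  simp only [ec_eq_toCircle, AddChar.map_add_eq_mul, Circle.coe_mul]

lemma ec_zero : ec q 0 = 1 := by
  simp [ec_eq_toCircle]

lemma conj_ec (x : ZMod q) : conj (ec q x) = ec q (-x) := by
  rw [ec_eq_toCircle, ec_eq_toCircle, AddChar.map_neg_eq_inv, Circle.coe_inv_eq_conj]

lemma ec_add_sub_add (a b c d : ZMod q) :
    ec q (a + c - (b + d)) = ec q (c - d) * ec q (a - b) := by
  rw [← ec_add]
  ring_nf

lemma conj_Rq_natCast (len : ℕ) (a b : ℕ → ZMod q) (τ : ℕ) :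
    conj (Rq q len a b τ) = ∑ i ∈ range (len - τ), ec q (b (i + τ) - a i) := by
  simp only [Rq_natCast, map_sum, conj_ec, neg_sub]

theorem Rq_of_blocks {Q ℓ : ℕ} {f g g0 h0 u w : ℕ → ZMod q}
    (hf : ∀ i < Q * ℓ, f i = g0 (i % ℓ) + u (i / ℓ))
    (hg : ∀ i < Q * ℓ, g i = h0 (i % ℓ) + w (i / ℓ)) (hQ : 0 < Q) {τ : ℕ} (hτ : τ ≤ ℓ) :
    Rq q (Q * ℓ) f g τ =
      (∑ k ∈ range Q, ec q (u k - w k)) * Rq q ℓ g0 h0 τ +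
      (∑ k ∈ range (Q - 1), ec q (u k - w (k + 1))) * conj (Rq q ℓ h0 g0 (ℓ - τ : ℕ)) := by
  obtain ⟨n, rfl⟩ := Nat.exists_eq_add_one_of_ne_zero hQ.ne'
  set F : ℕ → ℂ := fun i => ec q (f i - g (i + τ))
  have within : ∀ k ≤ n,
      ∑ r ∈ range (ℓ - τ), F (k * ℓ + r) = ec q (u k - w k) * Rq q ℓ g0 h0 τ := by
    intro k hk
    rw [Rq_natCast, mul_sum]
    refine sum_congr rfl fun r hr => ?_
    have hr : r < ℓ - τ := mem_range.mp hr
    rw [← ec_add_sub_add, ← apply_mul_add_of_blocks hf (by omega) (by omega),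
      ← apply_mul_add_of_blocks hg (by omega) (by omega), ← add_assoc]
  have across : ∀ k < n, ∑ j ∈ range τ, F (k * ℓ + (ℓ - τ + j)) =
      ec q (u k - w (k + 1)) * conj (Rq q ℓ h0 g0 (ℓ - τ : ℕ)) := by
    intro k hk
    rw [conj_Rq_natCast, Nat.sub_sub_self hτ, mul_sum]
    refine sum_congr rfl fun j hj => ?_
    have hj : j < τ := mem_range.mp hj
    have hnext : k * ℓ + (ℓ - τ + j) + τ = (k + 1) * ℓ + j := by rw [add_mul]; omega
    rw [← ec_add_sub_add, ← apply_mul_add_of_blocks hf (by omega) (by omega), add_comm j,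
      ← apply_mul_add_of_blocks hg (by omega) (by omega), ← hnext]
  have whole : ∀ k < n, ∑ r ∈ range ℓ, F (k * ℓ + r) =
      ec q (u k - w k) * Rq q ℓ g0 h0 τ +
        ec q (u k - w (k + 1)) * conj (Rq q ℓ h0 g0 (ℓ - τ : ℕ)) := by
    intro k hk
    rw [← within k hk.le, ← across k hk, ← sum_range_add, Nat.sub_add_cancel hτ]
  calc Rq q ((n + 1) * ℓ) f g τ
      = ∑ k ∈ range n, ∑ r ∈ range ℓ, F (k * ℓ + r) + ∑ r ∈ range (ℓ - τ), F (n * ℓ + r) := by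
        rw [Rq_natCast, show (n + 1) * ℓ - τ = n * ℓ + (ℓ - τ) by rw [add_mul]; omega,
          sum_range_add, sum_range_mul_eq_sum_sum]
    _ = _ := by
        rw [sum_congr rfl fun k hk => whole k (mem_range.mp hk), within n le_rfl,
          sum_add_distrib, sum_range_succ, ← sum_mul, ← sum_mul, Nat.add_sub_cancel]
        ring

end

theorem stmt9_general (q v ℓ : ℕ) (hq : 2 ≤ q) (hv : 1 ≤ v)
    (g0 h0 : ℕ → ZMod q) (u w : ℕ → ZMod q) (hu0 : u 0 = 0) (hw0 : w 0 = 0)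
    (f g : ℕ → ZMod q)
    (hf : ∀ i < q ^ v * ℓ, f i = g0 (i % ℓ) + u (i / ℓ))
    (hg : ∀ i < q ^ v * ℓ, g i = h0 (i % ℓ) + w (i / ℓ))
    (τ : ℕ) (hτ2 : τ < ℓ) :
    Rq q (q ^ v * ℓ) f g (τ : ℤ) =
      (1 + ∑ k ∈ Finset.Icc 1 (q ^ v - 1), ec q (u k - w k)) * Rq q ℓ g0 h0 (τ : ℤ) +
      (ec q (-(w 1)) + ∑ k ∈ Finset.Icc 1 (q ^ v - 2), ec q (u k - w (k + 1))) *
        (starRingEnd ℂ) (Rq q ℓ h0 g0 ((ℓ - τ : ℕ) : ℤ)) := by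
  have : NeZero q := ⟨by omega⟩
  have hQ : 2 ≤ q ^ v := hq.trans (Nat.le_self_pow (by omega) q)
  rw [Rq_of_blocks hf hg (by omega) hτ2.le, sum_range_eq_add_sum_Icc _ (by omega),
    sum_range_eq_add_sum_Icc _ (by omega), Nat.sub_sub, hu0, hw0, sub_zero, zero_sub, ec_zero]

theorem stmt9 (q v ℓ : ℕ) (hq : 2 ≤ q) (hℓ : 1 ≤ ℓ) (hv : 1 ≤ v)
    (g0 h0 : ℕ → ZMod q) (u w : ℕ → ZMod q) (hu0 : u 0 = 0) (hw0 : w 0 = 0)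
    (f g : ℕ → ZMod q)
    (hf : ∀ i < q ^ v * ℓ, f i = g0 (i % ℓ) + u (i / ℓ))
    (hg : ∀ i < q ^ v * ℓ, g i = h0 (i % ℓ) + w (i / ℓ))
    (τ : ℕ) (hτ1 : 0 < τ) (hτ2 : τ < ℓ) :
    Rq q (q ^ v * ℓ) f g (τ : ℤ) =
      (1 + ∑ k ∈ Finset.Icc 1 (q ^ v - 1), ec q (u k - w k)) * Rq q ℓ g0 h0 (τ : ℤ) +
      (ec q (-(w 1)) + ∑ k ∈ Finset.Icc 1 (q ^ v - 2), ec q (u k - w (k + 1))) *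
        (starRingEnd ℂ) (Rq q ℓ h0 g0 ((ℓ - τ : ℕ) : ℤ)) :=
  stmt9_general q v ℓ hq hv g0 h0 u w hu0 hw0 f g hf hg τ hτ2
end

section
/- For the at-most-q^m-length setting: if i and j are integers in [0, q^m) with q-ary digits agreeing in position k, and i^{(t)}, j^{(t)} are obtained from i, j by replacing the k-th digit d by (d+t) mod q for t ∈ {1,…,q-1}, then for the quadratic form f(x) = Σ_{α}Σ_{β} a_{α,β} x_{π_α(β)} x_{π_α(β+1)} + (terms not involving products of two distinct quadratic neighbors) evaluated at digit vectors, with k = π_{α₁}(β₁-1) the predecessor of the first position β₁ where the digit vectors of i and j differ within block α₁ (and digits of i and j agree on all blocks α < α₁ and at positions π_{α₁}(1),…,π_{α₁}(β₁-1)), one has f_{i^{(t)}} - f_i - f_{j^{(t)}} + f_j ≡ t · a_{α₁,β₁-1} · (i_{π_{α₁}(β₁)} - j_{π_{α₁}(β₁)}) (mod q). Consequently, if a_{α₁,β₁-1} is coprime to q and i_{π_{α₁}(β₁)} ≠ j_{π_{α₁}(β₁)}, then ξ^{f_i - f_j} + Σ_{t=1}^{q-1} ξ^{f_{i^{(t)}}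 - f_{j^{(t)}}} = 0 where ξ = e^{2πi/q}. -/
open Finset Complex

/-- The natural number obtained from `i` by replacing its `k`-th `q`-ary digit `d`
by `(d + t) mod q`, all other digits unchanged. -/
def modifyDigit (q i k t : ℕ) : ℕ :=
  i - dig q i k * q ^ (k - 1) + (dig q i k + t) % q * q ^ (k - 1)


/-!
Changing the digit at `k = π α₁ (β₁ - 1)` by `t` only touches the separable term `g k` and the two
chain products containing position `k`. In the double difference over `i` and `j` the `g k` term
cancels because `i` and `j` share digit `k`, and the product with the predecessor
`π α₁ (β₁ - 2)` cancels because `i` and `j` agree there, leaving `t · a · (i_{π β₁} - j_{π β₁})`.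
With `c = a · (i_{π β₁} - j_{π β₁}) ≠ 0`, the sum over `t ∈ [0, q)` is `ξ^{f_i - f_j}` times the
geometric sum of the `q`-th root of unity `ξ^c ≠ 1`, hence zero.
-/

lemma dig_eq_of_mod_eq {q n n' e s : ℕ} (h : n % q ^ e = n' % q ^ e) (hs : 1 ≤ s)
    (hse : s ≤ e) : dig q n s = dig q n' s := by
  have hdvd : q ^ (s - 1) * q ∣ q ^ e := by
    rw [← pow_succ]; exact pow_dvd_pow q (by omega)
  unfold dig
  rw [← Nat.mod_mul_right_div_self, ← Nat.mod_mul_right_div_self, ← Nat.mod_mod_of_dvd n hdvd,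
    ← Nat.mod_mod_of_dvd n' hdvd, h]

lemma dig_eq_of_div_eq {q n n' e s : ℕ} (h : n / q ^ e = n' / q ^ e) (hes : e < s) :
    dig q n s = dig q n' s := by
  have hsplit : ∀ x, x / q ^ (s - 1) = x / q ^ e / q ^ (s - 1 - e) := fun x => by
    rw [Nat.div_div_eq_div_mul, ← pow_add, Nat.add_sub_cancel' (by omega)]
  unfold dig
  rw [hsplit, hsplit n', h]

lemma modifyDigit_eq (q i k t : ℕ) :
    modifyDigit q i k t
      = i % q ^ (k - 1) + ((dig q i k + t) % q + i / q ^ (k - 1) / q * q) * q ^ (k - 1) := by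
  unfold modifyDigit dig
  set P := q ^ (k - 1)
  set D := i / P % q
  set H := i / P / q
  have hi : i = i % P + D * P + H * q * P := calc
    i = i % P + P * (i / P) := (Nat.mod_add_div i P).symm
    _ = i % P + D * P + H * q * P := by rw [← Nat.mod_add_div (i / P) q]; ring
  rw [add_mul]
  omega

lemma modifyDigit_mod_pow (q i k t : ℕ) :
    modifyDigit q i k t % q ^ (k - 1) = i % q ^ (k - 1) := by
  rw [modifyDigit_eq, Nat.add_mul_mod_self_right, Nat.mod_mod]

lemma modifyDigit_div_pow {q : ℕ} (hq : 0 < q) (i k t : ℕ) :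
    modifyDigit q i k t / q ^ (k - 1) = (dig q i k + t) % q + i / q ^ (k - 1) / q * q := by
  rw [modifyDigit_eq, Nat.add_mul_div_right _ _ (pow_pos hq _),
    Nat.div_eq_of_lt (Nat.mod_lt _ (pow_pos hq _)), zero_add]

lemma dig_modifyDigit_self {q : ℕ} (hq : 0 < q) (i k t : ℕ) :
    dig q (modifyDigit q i k t) k = (dig q i k + t) % q := by
  rw [dig, modifyDigit_div_pow hq, Nat.add_mul_mod_self_right, Nat.mod_mod]

lemma dig_modifyDigit_of_ne {q : ℕ} (hq : 0 < q) {i k s : ℕ} (hk : 1 ≤ k) (hs : 1 ≤ s)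
    (hsk : s ≠ k) (t : ℕ) : dig q (modifyDigit q i k t) s = dig q i s := by
  rcases hsk.lt_or_gt with hlt | hgt
  · exact dig_eq_of_mod_eq (e := k - 1) (modifyDigit_mod_pow q i k t) hs (by omega)
  · refine dig_eq_of_div_eq (e := k) ?_ hgt
    have hpow : q ^ k = q ^ (k - 1) * q := by rw [← pow_succ, Nat.sub_add_cancel hk]
    rw [hpow, ← Nat.div_div_eq_div_mul, ← Nat.div_div_eq_div_mul, modifyDigit_div_pow hq,
      Nat.add_mul_div_right _ _ hq, Nat.div_eq_of_lt (Nat.mod_lt _ hq), zero_add]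

lemma natCast_dig_inj {q : ℕ} {i j k s : ℕ} :
    (dig q i k : ZMod q) = dig q j s ↔ dig q i k = dig q j s := by
  rw [ZMod.natCast_eq_natCast_iff']
  simp only [dig, Nat.mod_mod]

lemma ec_eq_stdAddChar {q : ℕ} [NeZero q] (x : ZMod q) : ec q x = ZMod.stdAddChar x := by
  rw [ec, xiq, ZMod.stdAddChar_apply, ZMod.toCircle_apply, ← Complex.exp_nat_mul]
  ring_nf

lemma ec_add_sum_Icc_eq_zero {q : ℕ} [NeZero q] {c : ZMod q} (hc : c ≠ 0) (x : ZMod q) :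
    ec q x + ∑ t ∈ Icc 1 (q - 1), ec q (x + t * c) = 0 := by
  set ψ : AddChar (ZMod q) ℂ := ZMod.stdAddChar
  have hψc : ψ c ≠ 1 := fun h =>
    hc (ZMod.injective_stdAddChar (h.trans (AddChar.map_zero_eq_one ψ).symm))
  have hIcc : Icc 1 (q - 1) = Ico 1 q := by
    ext; simp only [mem_Icc, mem_Ico]; have := NeZero.pos q; omega
  have hgeom : ∑ t ∈ range q, ψ c ^ t = 0 := by
    rw [geom_sum_eq hψc, ← AddChar.map_nsmul_eq_pow, nsmul_eq_mul, ZMod.natCast_self, zero_mul,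
      AddChar.map_zero_eq_one, sub_self, zero_div]
  calc ec q x + ∑ t ∈ Icc 1 (q - 1), ec q (x + t * c)
      = ∑ t ∈ range q, ψ x * ψ c ^ t := by
        rw [sum_range_eq_add_Ico _ (NeZero.pos q), hIcc]
        simp only [ec_eq_stdAddChar, AddChar.map_add_eq_mul, ← nsmul_eq_mul,
          AddChar.map_nsmul_eq_pow, pow_zero, mul_one, ψ]
    _ = 0 := by rw [← mul_sum, hgeom, mul_zero]

lemma ec_add_sum_Icc_eq_zero_of_sub_sub_add {q : ℕ} [NeZero q] {c x y : ZMod q}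
    {z w : ℕ → ZMod q} (hc : c ≠ 0) (h : ∀ t ∈ Icc 1 (q - 1), z t - x - w t + y = t * c) :
    ec q (x - y) + ∑ t ∈ Icc 1 (q - 1), ec q (z t - w t) = 0 := by
  rw [← ec_add_sum_Icc_eq_zero hc (x - y)]
  congr 1
  exact sum_congr rfl fun t ht => congrArg (ec q) (by linear_combination h t ht)

section Chain

variable {R : Type*} [CommRing R]

def chainSum (d : ℕ) (mα : ℕ → ℕ) (c X : ℕ → ℕ → R) : R :=
  ∑ α ∈ Icc 1 d, ∑ β ∈ Icc 1 (mα α - 1), c α β * X α β * X α (β + 1)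

lemma chainSum_sub_sub_add {d : ℕ} {mα : ℕ → ℕ} (c : ℕ → ℕ → R) {X X' Y Y' : ℕ → ℕ → R}
    {α₁ b : ℕ} {t : R} (hα₁ : α₁ ∈ Icc 1 d) (hb : b ∈ Icc 1 (mα α₁ - 1))
    (hX : ∀ α ∈ Icc 1 d, ∀ β ∈ Icc 1 (mα α), (α, β) ≠ (α₁, b) → X' α β = X α β)
    (hY : ∀ α ∈ Icc 1 d, ∀ β ∈ Icc 1 (mα α), (α, β) ≠ (α₁, b) → Y' α β = Y α β)
    (hXb : X' α₁ b = X α₁ b + t) (hYb : Y' α₁ b = Y α₁ b + t)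
    (hXY : ∀ β ∈ Icc 1 (b - 1), X α₁ β = Y α₁ β) :
    chainSum d mα c X' - chainSum d mα c X - chainSum d mα c Y' + chainSum d mα c Y
      = t * c α₁ b * (X α₁ (b + 1) - Y α₁ (b + 1)) := by
  have hmem : ∀ α β, β ∈ Icc 1 (mα α - 1) → β ∈ Icc 1 (mα α) ∧ β + 1 ∈ Icc 1 (mα α) := by
    intro α β hβ; simp only [mem_Icc] at hβ ⊢; omega
  have hfar : ∀ α ∈ Icc 1 d, ∀ β ∈ Icc 1 (mα α - 1), (α, β) ≠ (α₁, b) → (α, β + 1) ≠ (α₁, b) →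
      c α β * X' α β * X' α (β + 1) - c α β * X α β * X α (β + 1)
        - c α β * Y' α β * Y' α (β + 1) + c α β * Y α β * Y α (β + 1) = 0 := by
    intro α hα β hβ h₀ h₁
    rw [hX α hα β (hmem α β hβ).1 h₀, hX α hα (β + 1) (hmem α β hβ).2 h₁,
      hY α hα β (hmem α β hβ).1 h₀, hY α hα (β + 1) (hmem α β hβ).2 h₁]
    ring
  unfold chainSum
  simp only [← sum_sub_distrib, ← sum_add_distrib]
  rw [sum_eq_single_of_mem α₁ hα₁ fun α hα hne => sum_eq_zero fun β hβ =>
    hfar α hα β hβ (by simp [hne]) (by simp [hne])]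
  rw [sum_eq_single_of_mem b hb]
  · have hnext : (α₁, b + 1) ≠ (α₁, b) := by simp
    rw [hXb, hYb, hX α₁ hα₁ (b + 1) (hmem α₁ b hb).2 hnext,
      hY α₁ hα₁ (b + 1) (hmem α₁ b hb).2 hnext]
    ring
  · intro β hβ hβb
    by_cases hprev : β + 1 = b
    · have hβ' : (α₁, β) ≠ (α₁, b) := by simp [hβb]
      rw [hprev, hXb, hYb, hX α₁ hα₁ β (hmem α₁ β hβ).1 hβ', hY α₁ hα₁ β (hmem α₁ β hβ).1 hβ',
        hXY β (by simp only [mem_Icc] at hβ ⊢; omega)]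
      ring
    · exact hfar α₁ hα₁ β hβ (by simp [hβb]) (by simp [hprev])

end Chain

lemma sum_sub_sub_add_eq_zero {ι κ M : Type*} [DecidableEq ι] [AddCommGroup M]
    (S : Finset ι) (φ : ι → κ → M) {u u' v v' : ι → κ} {k : ι}
    (hu : ∀ s ∈ S, s ≠ k → u' s = u s) (hv : ∀ s ∈ S, s ≠ k → v' s = v s)
    (hk : u k = v k) (hk' : u' k = v' k) :
    ∑ s ∈ S, φ s (u' s) - ∑ s ∈ S, φ s (u s) - ∑ s ∈ S, φ s (v' s) + ∑ s ∈ S, φ s (v s) = 0 := by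
  simp only [← sum_sub_distrib, ← sum_add_distrib]
  refine sum_eq_zero fun s hs => ?_
  by_cases hsk : s = k
  · subst hsk; rw [hk, hk']; abel
  · rw [hu s hs hsk, hv s hs hsk]; abel

lemma natCast_dig_modifyDigit_self {q : ℕ} (hq : 0 < q) (i k t : ℕ) :
    (dig q (modifyDigit q i k t) k : ZMod q) = dig q i k + t := by
  rw [dig_modifyDigit_self hq, ZMod.natCast_mod, Nat.cast_add]

lemma chainSum_dig_modifyDigit {q d : ℕ} {mα : ℕ → ℕ} {π : ℕ → ℕ → ℕ} (hq : 0 < q)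
    (c : ℕ → ℕ → ZMod q) {α₁ b i j t : ℕ}
    (hpos : ∀ α ∈ Icc 1 d, ∀ β ∈ Icc 1 (mα α), 1 ≤ π α β)
    (hinj : ∀ α ∈ Icc 1 d, ∀ β ∈ Icc 1 (mα α), π α β = π α₁ b → α = α₁ ∧ β = b)
    (hα₁ : α₁ ∈ Icc 1 d) (hb : b ∈ Icc 1 (mα α₁ - 1))
    (hagree : ∀ β ∈ Icc 1 (b - 1), dig q i (π α₁ β) = dig q j (π α₁ β)) :
    chainSum d mα c (fun α β => (dig q (modifyDigit q i (π α₁ b) t) (π α β) : ZMod q))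
      - chainSum d mα c (fun α β => (dig q i (π α β) : ZMod q))
      - chainSum d mα c (fun α β => (dig q (modifyDigit q j (π α₁ b) t) (π α β) : ZMod q))
      + chainSum d mα c (fun α β => (dig q j (π α β) : ZMod q))
      = t * c α₁ b * ((dig q i (π α₁ (b + 1)) : ZMod q) - dig q j (π α₁ (b + 1))) := by
  have hk : 1 ≤ π α₁ b := hpos α₁ hα₁ b (Icc_subset_Icc_right (Nat.sub_le _ _) hb)
  have hoff : ∀ x, ∀ α ∈ Icc 1 d, ∀ β ∈ Icc 1 (mα α), (α, β) ≠ (α₁, b) →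
      (dig q (modifyDigit q x (π α₁ b) t) (π α β) : ZMod q) = dig q x (π α β) :=
    fun x α hα β hβ hαβ => congrArg _ <| dig_modifyDigit_of_ne hq hk (hpos α hα β hβ)
      (fun h => hαβ (Prod.ext_iff.mpr (hinj α hα β hβ h))) t
  exact chainSum_sub_sub_add c hα₁ hb (hoff i) (hoff j) (natCast_dig_modifyDigit_self hq _ _ _)
    (natCast_dig_modifyDigit_self hq _ _ _) fun β hβ => congrArg _ (hagree β hβ)

theorem stmt12_general (q m d : ℕ) (hq : 2 ≤ q)
    (mα : ℕ → ℕ)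
    (π : ℕ → ℕ → ℕ)
    (hrange : ∀ α ∈ Finset.Icc 1 d, ∀ β ∈ Finset.Icc 1 (mα α), π α β ∈ Finset.Icc 1 m)
    (hinj : ∀ α ∈ Finset.Icc 1 d, ∀ β ∈ Finset.Icc 1 (mα α), ∀ α' ∈ Finset.Icc 1 d,
      ∀ β' ∈ Finset.Icc 1 (mα α'), π α β = π α' β' → α = α' ∧ β = β')
    (a : ℕ → ℕ → ℕ) (g : ℕ → ℕ → ZMod q)
    (F : ℕ → ZMod q)
    (hF : ∀ i, F i =
      (∑ α ∈ Finset.Icc 1 d, ∑ β ∈ Finset.Icc 1 (mα α - 1),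
        (a α β : ZMod q) * (dig q i (π α β) : ZMod q) * (dig q i (π α (β + 1)) : ZMod q))
      + ∑ s ∈ Finset.Icc 1 m, g s (dig q i s))
    (α₁ β₁ i j : ℕ) (hα₁ : α₁ ∈ Finset.Icc 1 d) (hβ₁ : β₁ ∈ Finset.Icc 2 (mα α₁))
    (hagree2 : ∀ β ∈ Finset.Icc 1 (β₁ - 1), dig q i (π α₁ β) = dig q j (π α₁ β))
    (hne : dig q i (π α₁ β₁) ≠ dig q j (π α₁ β₁)) :
    (∀ t ∈ Finset.Icc 1 (q - 1),
      F (modifyDigit q i (π α₁ (β₁ - 1)) t) - F i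
        - F (modifyDigit q j (π α₁ (β₁ - 1)) t) + F j
      = (t : ZMod q) * (a α₁ (β₁ - 1) : ZMod q) *
          ((dig q i (π α₁ β₁) : ZMod q) - (dig q j (π α₁ β₁) : ZMod q))) ∧
    (Nat.Coprime (a α₁ (β₁ - 1)) q →
      ec q (F i - F j) + ∑ t ∈ Finset.Icc 1 (q - 1),
        ec q (F (modifyDigit q i (π α₁ (β₁ - 1)) t)
              - F (modifyDigit q j (π α₁ (β₁ - 1)) t)) = 0) := by
  have hq0 : 0 < q := by omega
  have : NeZero q := ⟨hq0.ne'⟩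
  obtain ⟨hβ₁2, hβ₁m⟩ := mem_Icc.mp hβ₁
  have hb : β₁ - 1 ∈ Icc 1 (mα α₁ - 1) := mem_Icc.mpr ⟨by omega, by omega⟩
  have hpos : ∀ α ∈ Icc 1 d, ∀ β ∈ Icc 1 (mα α), 1 ≤ π α β :=
    fun α hα β hβ => (mem_Icc.mp (hrange α hα β hβ)).1
  have hk := hpos α₁ hα₁ _ (Icc_subset_Icc_right (Nat.sub_le _ _) hb)
  have hkij := hagree2 (β₁ - 1) (mem_Icc.mpr ⟨by omega, le_rfl⟩)
  have part1 : ∀ t ∈ Icc 1 (q - 1), F (modifyDigit q i (π α₁ (β₁ - 1)) t) - F i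
      - F (modifyDigit q j (π α₁ (β₁ - 1)) t) + F j = (t : ZMod q) * (a α₁ (β₁ - 1) : ZMod q) *
        ((dig q i (π α₁ β₁) : ZMod q) - (dig q j (π α₁ β₁) : ZMod q)) := by
    intro t _
    have hchain := chainSum_dig_modifyDigit hq0 (fun α β => (a α β : ZMod q)) (t := t) hpos
      (fun α hα β hβ => hinj α hα β hβ α₁ hα₁ _ (Icc_subset_Icc_right (Nat.sub_le _ _) hb)) hα₁ hb
      (fun β hβ => hagree2 β (Icc_subset_Icc_right (Nat.sub_le _ _) hβ))
    have hsep := sum_sub_sub_add_eq_zero (Icc 1 m) g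
      (fun s hs hsk => dig_modifyDigit_of_ne hq0 hk (mem_Icc.mp hs).1 hsk t)
      (fun s hs hsk => dig_modifyDigit_of_ne hq0 hk (mem_Icc.mp hs).1 hsk t) hkij
      (by rw [dig_modifyDigit_self hq0, dig_modifyDigit_self hq0, hkij])
    rw [chainSum, chainSum, chainSum, chainSum, Nat.sub_add_cancel (by omega : 1 ≤ β₁)] at hchain
    simp only [hF]
    linear_combination hchain + hsep
  refine ⟨part1, fun hcop => ec_add_sum_Icc_eq_zero_of_sub_sub_add ?_
    fun t ht => (part1 t ht).trans (mul_assoc _ _ _)⟩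
  exact ((ZMod.isUnit_iff_coprime _ q).mpr hcop).mul_right_eq_zero.not.mpr
    (sub_ne_zero.mpr (natCast_dig_inj.not.mpr hne))

theorem stmt12 (q m d : ℕ) (hq : 2 ≤ q) (hm : 1 ≤ m) (hd : 1 ≤ d)
    (mα : ℕ → ℕ)
    (π : ℕ → ℕ → ℕ)
    (hrange : ∀ α ∈ Finset.Icc 1 d, ∀ β ∈ Finset.Icc 1 (mα α), π α β ∈ Finset.Icc 1 m)
    (hinj : ∀ α ∈ Finset.Icc 1 d, ∀ β ∈ Finset.Icc 1 (mα α), ∀ α' ∈ Finset.Icc 1 d,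
      ∀ β' ∈ Finset.Icc 1 (mα α'), π α β = π α' β' → α = α' ∧ β = β')
    (a : ℕ → ℕ → ℕ) (g : ℕ → ℕ → ZMod q)
    (F : ℕ → ZMod q)
    (hF : ∀ i, F i =
      (∑ α ∈ Finset.Icc 1 d, ∑ β ∈ Finset.Icc 1 (mα α - 1),
        (a α β : ZMod q) * (dig q i (π α β) : ZMod q) * (dig q i (π α (β + 1)) : ZMod q))
      + ∑ s ∈ Finset.Icc 1 m, g s (dig q i s))
    (α₁ β₁ i j : ℕ) (hα₁ : α₁ ∈ Finset.Icc 1 d) (hβ₁ : β₁ ∈ Finset.Icc 2 (mα α₁))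
    (hi : i < q ^ m) (hj : j < q ^ m)
    (hagree1 : ∀ α ∈ Finset.Icc 1 d, α < α₁ → ∀ β ∈ Finset.Icc 1 (mα α),
      dig q i (π α β) = dig q j (π α β))
    (hagree2 : ∀ β ∈ Finset.Icc 1 (β₁ - 1), dig q i (π α₁ β) = dig q j (π α₁ β))
    (hne : dig q i (π α₁ β₁) ≠ dig q j (π α₁ β₁)) :
    (∀ t ∈ Finset.Icc 1 (q - 1),
      F (modifyDigit q i (π α₁ (β₁ - 1)) t) - F i
        - F (modifyDigit q j (π α₁ (β₁ - 1)) t) + F j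
      = (t : ZMod q) * (a α₁ (β₁ - 1) : ZMod q) *
          ((dig q i (π α₁ β₁) : ZMod q) - (dig q j (π α₁ β₁) : ZMod q))) ∧
    (Nat.Coprime (a α₁ (β₁ - 1)) q →
      ec q (F i - F j) + ∑ t ∈ Finset.Icc 1 (q - 1),
        ec q (F (modifyDigit q i (π α₁ (β₁ - 1)) t)
              - F (modifyDigit q j (π α₁ (β₁ - 1)) t)) = 0) :=
  stmt12_general q m d hq mα π hrange hinj a g F hF α₁ β₁ i j hα₁ hβ₁ hagree2 hne
end

section
/- For an (M, N, L)-mutually orthogonal complementary set of unimodular complex sequences, the set size satisfies M ≤ N. -/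
/-!
Summing each sequence of the `i`-th set gives a vector `vᵢ ∈ ℂᴺ`. The product of two sums,
`(∑ f) * conj (∑ g)`, is the sum of the aperiodic correlations of `f` and `g` over all shifts
`|τ| < L`. Hence the cross-correlation condition makes the `vᵢ` pairwise orthogonal, while
complementarity and unimodularity give `‖vᵢ‖² = N L ≠ 0`. So `M` nonzero orthogonal vectors
live in `ℂᴺ`, and `M ≤ N`.
-/

open Finset

/-- Aperiodic cross-correlation of two length-`L` complex sequences at integer shift `τ`. -/
noncomputable def acorr (L : ℕ) (a b : ℕ → ℂ) (τ : ℤ) : ℂ :=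
  if 0 ≤ τ then ∑ i ∈ Finset.range (L - τ.toNat), a i * (starRingEnd ℂ) (b (i + τ.toNat))
  else ∑ i ∈ Finset.range (L - (-τ).toNat), a (i + (-τ).toNat) * (starRingEnd ℂ) (b i)

open ComplexConjugate

lemma acorr_eq_sum_filter (L : ℕ) (f g : ℕ → ℂ) (τ : ℤ) :
    acorr L f g τ =
      ∑ p ∈ range L ×ˢ range L with (p.2 : ℤ) - p.1 = τ, f p.1 * conj (g p.2) := by
  cases τ with
  | ofNat d =>
    simp only [acorr, Int.ofNat_eq_natCast, Nat.cast_nonneg, if_true, Int.toNat_natCast]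
    refine sum_nbij' (fun i => (i, i + d)) Prod.fst ?_ ?_ ?_ ?_ ?_ <;>
      simp +contextual [Prod.ext_iff] <;> omega
  | negSucc d =>
    simp only [acorr, Int.neg_negSucc]
    refine sum_nbij' (fun i => (i + (d + 1), i)) Prod.snd ?_ ?_ ?_ ?_ ?_ <;>
      simp +contextual [Prod.ext_iff] <;> omega

lemma sum_mul_conj_sum_eq_sum_acorr (L : ℕ) (f g : ℕ → ℂ) :
    (∑ l ∈ range L, f l) * conj (∑ l ∈ range L, g l) =
      ∑ τ ∈ Ioo (-(L : ℤ)) L, acorr L f g τ := by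
  simp_rw [acorr_eq_sum_filter]
  rw [sum_fiberwise_of_maps_to fun p hp => by
      simp only [mem_product, mem_range] at hp
      rw [mem_Ioo]
      omega]
  rw [map_sum, sum_mul_sum, sum_product]

noncomputable def sumVector (N L : ℕ) (s : ℕ → ℕ → ℂ) : EuclideanSpace ℂ (Fin N) :=
  WithLp.toLp 2 fun k => ∑ l ∈ range L, s k l

lemma inner_sumVector (N L : ℕ) (s t : ℕ → ℕ → ℂ) :
    inner ℂ (sumVector N L s) (sumVector N L t) =
      ∑ τ ∈ Ioo (-(L : ℤ)) L, ∑ k ∈ range N, acorr L (t k) (s k) τ := by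
  rw [sum_comm, PiLp.inner_apply]
  simp only [sumVector]
  rw [Fin.sum_univ_eq_sum_range
    (fun k => inner ℂ (∑ l ∈ range L, s k l) (∑ l ∈ range L, t k l))]
  refine sum_congr rfl fun k _ => ?_
  rw [RCLike.inner_apply, sum_mul_conj_sum_eq_sum_acorr]

lemma inner_sumVector_eq_zero (N L : ℕ) (s t : ℕ → ℕ → ℂ)
    (h : ∀ τ : ℤ, |τ| ≤ (L : ℤ) - 1 → ∑ k ∈ range N, acorr L (t k) (s k) τ = 0) :
    inner ℂ (sumVector N L s) (sumVector N L t) = 0 := by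
  rw [inner_sumVector]
  exact sum_eq_zero fun τ hτ => h τ (by rw [mem_Ioo] at hτ; rw [abs_le]; omega)

lemma acorr_self_zero_of_norm_eq_one (L : ℕ) (f : ℕ → ℂ) (hf : ∀ l < L, ‖f l‖ = 1) :
    acorr L f f 0 = L := by
  have hsq : ∀ l ∈ range L, f l * conj (f l) = 1 := fun l hl => by
    rw [Complex.mul_conj, Complex.normSq_eq_norm_sq, hf l (mem_range.mp hl)]
    norm_num
  simp [acorr, sum_congr rfl hsq]

lemma inner_self_sumVector (N L : ℕ) (s : ℕ → ℕ → ℂ)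
    (hunimod : ∀ k < N, ∀ l < L, ‖s k l‖ = 1)
    (hauto : ∀ τ : ℤ, τ ≠ 0 → ∑ k ∈ range N, acorr L (s k) (s k) τ = 0) :
    inner ℂ (sumVector N L s) (sumVector N L s) = N * L := by
  have hempty (h0 : (0 : ℤ) ∉ Ioo (-(L : ℤ)) L) :
      ∑ k ∈ range N, acorr L (s k) (s k) 0 = 0 := by
    obtain rfl : L = 0 := by simpa using h0
    simp [acorr]
  rw [inner_sumVector, sum_eq_single 0 (fun τ _ hτ => hauto τ hτ) hempty,
    sum_congr rfl fun k hk => acorr_self_zero_of_norm_eq_one L (s k) (hunimod k (mem_range.mp hk))]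
  simp

lemma sumVector_ne_zero (N L : ℕ) (s : ℕ → ℕ → ℂ) (hN : N ≠ 0) (hL : L ≠ 0)
    (hunimod : ∀ k < N, ∀ l < L, ‖s k l‖ = 1)
    (hauto : ∀ τ : ℤ, τ ≠ 0 → ∑ k ∈ range N, acorr L (s k) (s k) τ = 0) :
    sumVector N L s ≠ 0 := by
  rw [← inner_self_ne_zero (𝕜 := ℂ), inner_self_sumVector N L s hunimod hauto]
  exact_mod_cast mul_ne_zero hN hL

theorem stmt15_general (M N L : ℕ) (hN : 1 ≤ N) (hL : 1 ≤ L)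
    (a : ℕ → ℕ → ℕ → ℂ)
    (hunimod : ∀ i < M, ∀ k < N, ∀ l < L, ‖a i k l‖ = 1)
    (hauto : ∀ i < M, ∀ τ : ℤ, τ ≠ 0 →
      ∑ k ∈ Finset.range N, acorr L (a i k) (a i k) τ = 0)
    (hcross : ∀ i < M, ∀ j < M, i ≠ j → ∀ τ : ℤ, |τ| ≤ (L : ℤ) - 1 →
      ∑ k ∈ Finset.range N, acorr L (a i k) (a j k) τ = 0) :
    M ≤ N := by
  let v (i : Fin M) : EuclideanSpace ℂ (Fin N) := sumVector N L (a i)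
  have horth : Pairwise fun i j => inner ℂ (v i) (v j) = 0 := fun i j hij =>
    inner_sumVector_eq_zero N L _ _ (hcross j j.2 i i.2 (Fin.val_ne_of_ne hij.symm))
  have hne (i : Fin M) : v i ≠ 0 :=
    sumVector_ne_zero N L (a i) (by omega) (by omega) (hunimod i i.2) (hauto i i.2)
  simpa using (linearIndependent_of_ne_zero_of_inner_eq_zero hne horth).fintype_card_le_finrank

/-- For an `(M,N,L)`-MOCS of unimodular sequences, the set size satisfies `M ≤ N`. -/
theorem stmt15 (M N L : ℕ) (hM : 1 ≤ M) (hN : 1 ≤ N) (hL : 1 ≤ L)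
    (a : ℕ → ℕ → ℕ → ℂ)
    (hunimod : ∀ i < M, ∀ k < N, ∀ l < L, ‖a i k l‖ = 1)
    (hauto : ∀ i < M, ∀ τ : ℤ, τ ≠ 0 →
      ∑ k ∈ Finset.range N, acorr L (a i k) (a i k) τ = 0)
    (hcross : ∀ i < M, ∀ j < M, i ≠ j → ∀ τ : ℤ, |τ| ≤ (L : ℤ) - 1 →
      ∑ k ∈ Finset.range N, acorr L (a i k) (a j k) τ = 0) :
    M ≤ N :=
  stmt15_general M N L hN hL a hunimod hauto hcross
end
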